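/- arXiv:1307.0910 — 4 statements merged into one kernel-verified Lean document; each statement's English description precedes it below -/
import Mathlib

section
/- Let φ1, f, g : (x1,x2) → ℝ be continuous with all products integrable near x1. Define ⟨u,v⟩(x) = ∫_{x1}^x u v, f^{(1)} = f − φ1^{(1)}⟨φ1,f⟩ and g^{(1)} = g − φ1^{(1)}⟨φ1,g⟩ where φ1^{(1)} = φ1/(1+⟨φ1,φ1⟩). Then f^{(1)}(x) g^{(1)}(x) = f(x)g(x) − d/dx [ ⟨φ1,f⟩(x)⟨φ1,g⟩(x) / (1+⟨φ1,φ1⟩(x)) ]. -/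
open Set MeasureTheory intervalIntegral

/-
The identity is the quotient rule for `y ↦ ⟨φ1,f⟩ ⟨φ1,g⟩ / (1 + ⟨φ1,φ1⟩)`: by the fundamental
theorem of calculus the three pairings have derivatives `φ1 f`, `φ1 g`, `φ1²`, and expanding
`f^{(1)} g^{(1)}` gives exactly `f g` minus the resulting quotient-rule expression.
-/

theorem hasDerivAt_integral_of_integrableOn_Ioo {h : ℝ → ℝ} {a x : ℝ} {U : Set ℝ}
    (hU : IsOpen U) (hxU : x ∈ U) (hc : ContinuousOn h U) (hax : a ≤ x)
    (hint : IntegrableOn h (Ioo a x)) :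
    HasDerivAt (fun y => ∫ t in a..y, h t) (h x) x :=
  integral_hasDerivAt_right ((intervalIntegrable_iff_integrableOn_Ioo_of_le hax).2 hint)
    (hc.stronglyMeasurableAtFilter hU x hxU) (hc.continuousAt (hU.mem_nhds hxU))

theorem quotient_rule_expansion (p u v A B C : ℝ) (hC : C ≠ 0) :
    ((p * u * B + A * (p * v)) * C - A * B * (p * p)) / C ^ 2 =
      u * v - (u - p / C * A) * (v - p / C * B) := by
  field_simp
  ring

theorem am_product_identity (x1 x2 : ℝ) (φ1 f g : ℝ → ℝ)
    (hφ1 : ContinuousOn φ1 (Ioo x1 x2))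
    (hf : ContinuousOn f (Ioo x1 x2))
    (hg : ContinuousOn g (Ioo x1 x2))
    (hintff : ∀ x ∈ Ioo x1 x2, IntegrableOn (fun y => φ1 y * f y) (Ioo x1 x))
    (hintfg : ∀ x ∈ Ioo x1 x2, IntegrableOn (fun y => φ1 y * g y) (Ioo x1 x))
    (hint2 : ∀ x ∈ Ioo x1 x2, IntegrableOn (fun y => φ1 y * φ1 y) (Ioo x1 x)) :
    ∀ x ∈ Ioo x1 x2,
      HasDerivAt
        (fun y => (∫ t in x1..y, φ1 t * f t) * (∫ t in x1..y, φ1 t * g t) /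
          (1 + ∫ t in x1..y, φ1 t * φ1 t))
        (f x * g x -
          (f x - φ1 x / (1 + ∫ t in x1..x, φ1 t * φ1 t) *
              ∫ t in x1..x, φ1 t * f t) *
          (g x - φ1 x / (1 + ∫ t in x1..x, φ1 t * φ1 t) *
              ∫ t in x1..x, φ1 t * g t)) x := by
  intro x hx
  have hf' := hasDerivAt_integral_of_integrableOn_Ioo (h := fun y => φ1 y * f y) isOpen_Ioo hx
    (hφ1.mul hf) hx.1.le (hintff x hx)
  have hg' := hasDerivAt_integral_of_integrableOn_Ioo (h := fun y => φ1 y * g y) isOpen_Ioo hx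
    (hφ1.mul hg) hx.1.le (hintfg x hx)
  have hφ1' := (hasDerivAt_integral_of_integrableOn_Ioo (h := fun y => φ1 y * φ1 y) isOpen_Ioo
    hx (hφ1.mul hφ1) hx.1.le (hint2 x hx)).const_add 1
  have hpos : 0 < 1 + ∫ t in x1..x, φ1 t * φ1 t := by
    have : 0 ≤ ∫ t in x1..x, φ1 t * φ1 t :=
      integral_nonneg hx.1.le fun t _ => mul_self_nonneg (φ1 t)
    linarith
  rw [← quotient_rule_expansion _ _ _ _ _ _ hpos.ne']
  exact (hf'.mul hg').div hφ1' hpos.ne'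
end

section
/- Under the hypotheses of the product identity, for all x in (x1,x2): ⟨f^{(1)}, g^{(1)}⟩(x) = ⟨f,g⟩(x) − ⟨φ1,f⟩(x)⟨φ1,g⟩(x)/(1+⟨φ1,φ1⟩(x)). -/
open Set MeasureTheory intervalIntegral

theorem am_integrated_identity (x1 x2 : ℝ) (φ1 f g : ℝ → ℝ)
    (hφ1 : ContinuousOn φ1 (Ioo x1 x2))
    (hf : ContinuousOn f (Ioo x1 x2))
    (hg : ContinuousOn g (Ioo x1 x2))
    (hintff : ∀ x ∈ Ioo x1 x2, IntegrableOn (fun y => φ1 y * f y) (Ioo x1 x))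
    (hintfg : ∀ x ∈ Ioo x1 x2, IntegrableOn (fun y => φ1 y * g y) (Ioo x1 x))
    (hint2 : ∀ x ∈ Ioo x1 x2, IntegrableOn (fun y => φ1 y * φ1 y) (Ioo x1 x))
    (hintfgprod : ∀ x ∈ Ioo x1 x2, IntegrableOn (fun y => f y * g y) (Ioo x1 x)) :
    ∀ x ∈ Ioo x1 x2,
      (∫ t in x1..x,
        (f t - φ1 t / (1 + ∫ s in x1..t, φ1 s * φ1 s) *
            ∫ s in x1..t, φ1 s * f s) *
        (g t - φ1 t / (1 + ∫ s in x1..t, φ1 s * φ1 s) *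
            ∫ s in x1..t, φ1 s * g s)) =
      (∫ t in x1..x, f t * g t) -
        (∫ t in x1..x, φ1 t * f t) * (∫ t in x1..x, φ1 t * g t) /
          (1 + ∫ t in x1..x, φ1 t * φ1 t) := by
  intro x hx
  obtain ⟨hx1, hxx2⟩ := hx
  set x' : ℝ := (x + x2) / 2 with hx'def
  have hxx' : x < x' := by rw [hx'def]; linarith
  have hx'mem : x' ∈ Ioo x1 x2 := ⟨by linarith, by rw [hx'def]; linarith⟩
  -- integrability on Icc x1 x of the four products
  have key : ∀ u : ℝ → ℝ, IntegrableOn u (Ioo x1 x') → IntegrableOn u (Icc x1 x) := by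
    intro u hu
    rw [integrableOn_Icc_iff_integrableOn_Ioo]
    exact hu.mono_set (Ioo_subset_Ioo le_rfl hxx'.le)
  have huf : IntegrableOn (fun y => φ1 y * f y) (Icc x1 x) := key _ (hintff x' hx'mem)
  have hug : IntegrableOn (fun y => φ1 y * g y) (Icc x1 x) := key _ (hintfg x' hx'mem)
  have huq : IntegrableOn (fun y => φ1 y * φ1 y) (Icc x1 x) := key _ (hint2 x' hx'mem)
  have hufg : IntegrableOn (fun y => f y * g y) (Icc x1 x) := key _ (hintfgprod x' hx'mem)
  have hIcc : uIcc x1 x = Icc x1 x := uIcc_of_le hx1.le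
  -- primitives
  set F : ℝ → ℝ := fun t => ∫ s in x1..t, φ1 s * f s with hFdef
  set G : ℝ → ℝ := fun t => ∫ s in x1..t, φ1 s * g s with hGdef
  set P : ℝ → ℝ := fun t => 1 + ∫ s in x1..t, φ1 s * φ1 s with hPdef
  -- continuity on Icc
  have hFc : ContinuousOn F (Icc x1 x) := by
    rw [hFdef]; have := continuousOn_primitive_interval (a := x1) (b := x) (hIcc ▸ huf)
    rwa [hIcc] at this
  have hGc : ContinuousOn G (Icc x1 x) := by
    rw [hGdef]; have := continuousOn_primitive_interval (a := x1) (b := x) (hIcc ▸ hug)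
    rwa [hIcc] at this
  have hPc : ContinuousOn P (Icc x1 x) := by
    rw [hPdef]
    have := continuousOn_primitive_interval (a := x1) (b := x) (hIcc ▸ huq)
    rw [hIcc] at this
    exact continuousOn_const.add this
  -- P ≥ 1
  have hP1 : ∀ t ∈ Icc x1 x, 1 ≤ P t := by
    intro t ht
    have h0 : 0 ≤ ∫ s in x1..t, φ1 s * φ1 s :=
      intervalIntegral.integral_nonneg ht.1 (fun s _ => mul_self_nonneg _)
    rw [hPdef]; dsimp only; linarith
  have hPne : ∀ t ∈ Icc x1 x, P t ≠ 0 := fun t ht => by have := hP1 t ht; linarith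
  -- derivatives at interior points
  have hmemIoo : ∀ t ∈ Ioo x1 x, t ∈ Ioo x1 x2 := fun t ht => ⟨ht.1, ht.2.trans hxx2⟩
  have hderiv : ∀ (u : ℝ → ℝ), IntegrableOn u (Icc x1 x) → ContinuousOn u (Ioo x1 x2) →
      ∀ t ∈ Ioo x1 x, HasDerivAt (fun r => ∫ s in x1..r, u s) (u t) t := by
    intro u hu hc t ht
    have hti : IntervalIntegrable u volume x1 t :=
      (hu.mono_set (by rw [uIcc_of_le ht.1.le]; exact Icc_subset_Icc le_rfl ht.2.le)).intervalIntegrable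
    exact intervalIntegral.integral_hasDerivAt_right hti
      (hc.stronglyMeasurableAtFilter isOpen_Ioo t (hmemIoo t ht))
      ((hc t (hmemIoo t ht)).continuousAt (Ioo_mem_nhds (hmemIoo t ht).1 (hmemIoo t ht).2))
  have hFd : ∀ t ∈ Ioo x1 x, HasDerivAt F (φ1 t * f t) t := by
    intro t ht; rw [hFdef]; exact hderiv _ huf (hφ1.mul hf) t ht
  have hGd : ∀ t ∈ Ioo x1 x, HasDerivAt G (φ1 t * g t) t := by
    intro t ht; rw [hGdef]; exact hderiv _ hug (hφ1.mul hg) t ht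
  have hPd : ∀ t ∈ Ioo x1 x, HasDerivAt P (φ1 t * φ1 t) t := by
    intro t ht; rw [hPdef]
    exact (hderiv _ huq (hφ1.mul hφ1) t ht).const_add 1
  -- the derivative function
  set d : ℝ → ℝ := fun t => (φ1 t * f t) * (G t / P t) + (φ1 t * g t) * (F t / P t)
      - (φ1 t * φ1 t) * (F t * G t / P t ^ 2) with hddef
  set H : ℝ → ℝ := fun t => F t * G t / P t with hHdef
  have hHc : ContinuousOn H (Icc x1 x) := by
    rw [hHdef]; exact (hFc.mul hGc).div hPc hPne
  have hHd : ∀ t ∈ Ioo x1 x, HasDerivWithinAt H (d t) (Ioi t) t := by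
    intro t ht
    have htI : t ∈ Icc x1 x := ⟨ht.1.le, ht.2.le⟩
    have hP : P t ≠ 0 := hPne t htI
    have h0 : HasDerivAt H
        (((φ1 t * f t * G t + F t * (φ1 t * g t)) * P t - F t * G t * (φ1 t * φ1 t)) / P t ^ 2) t := by
      rw [hHdef]
      exact ((hFd t ht).mul (hGd t ht)).div (hPd t ht) hP
    have heq : d t = ((φ1 t * f t * G t + F t * (φ1 t * g t)) * P t - F t * G t * (φ1 t * φ1 t)) / P t ^ 2 := by
      rw [hddef]
      field_simp
    rw [heq]
    exact h0.hasDerivWithinAt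
  -- integrability of d
  have hdint : IntegrableOn d (Icc x1 x) := by
    rw [hddef]
    have h1 := huf.mul_continuousOn (hGc.div hPc hPne) isCompact_Icc
    have h2 := hug.mul_continuousOn (hFc.div hPc hPne) isCompact_Icc
    have h3 := huq.mul_continuousOn ((hFc.mul hGc).div (hPc.pow 2)
        (fun t ht => pow_ne_zero 2 (hPne t ht))) isCompact_Icc
    exact MeasureTheory.Integrable.sub (MeasureTheory.Integrable.add h1 h2) h3
  have hdII : IntervalIntegrable d volume x1 x := (hIcc ▸ hdint).intervalIntegrable
  have hfgII : IntervalIntegrable (fun t => f t * g t) volume x1 x := (hIcc ▸ hufg).intervalIntegrable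
  -- FTC for d
  have hFTC : (∫ t in x1..x, d t) = H x - H x1 :=
    intervalIntegral.integral_eq_sub_of_hasDeriv_right_of_le hx1.le hHc hHd hdII
  have hHx1 : H x1 = 0 := by
    rw [hHdef, hFdef]; simp
  -- pointwise identity for the integrand
  have hcong : ∀ t ∈ Ioo x1 x,
      (f t - φ1 t / P t * F t) * (g t - φ1 t / P t * G t) = f t * g t - d t := by
    intro t ht
    have hP : P t ≠ 0 := hPne t ⟨ht.1.le, ht.2.le⟩
    rw [hddef]
    field_simp
    ring
  -- rewrite the integral
  have hIeq : (∫ t in x1..x, (f t - φ1 t / P t * F t) * (g t - φ1 t / P t * G t))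
      = ∫ t in x1..x, (f t * g t - d t) := by
    apply intervalIntegral.integral_congr_ae
    have hne : ∀ᵐ t : ℝ, t ≠ x :=
      compl_mem_ae_iff.mpr (measure_singleton x)
    filter_upwards [hne] with t htne htmem
    rw [uIoc_of_le hx1.le] at htmem
    exact hcong t ⟨htmem.1, lt_of_le_of_ne htmem.2 htne⟩
  have hsplit : (∫ t in x1..x, (f t * g t - d t))
      = (∫ t in x1..x, f t * g t) - ∫ t in x1..x, d t :=
    intervalIntegral.integral_sub hfgII hdII
  have main : (∫ t in x1..x, (f t - φ1 t / P t * F t) * (g t - φ1 t / P t * G t))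
      = (∫ t in x1..x, f t * g t) - F x * G x / P x := by
    rw [hIeq, hsplit, hFTC, hHx1, hHdef]
    ring
  simp only [hFdef, hGdef, hPdef, hHdef] at main
  exact main
end

section
/- If φ_n, φ_m are continuous on (x1,x2) with ∫_{x1}^{x2} φ_n φ_m = h_n δ_{nm} (finite), φ1 is continuous with ∫_{x1}^{x2} φ1² = ∞, and all required integrals from x1 are finite, then the transformed functions φ_n^{(1)} = φ_n − φ1⟨φ1,φ_n⟩/(1+⟨φ1,φ1⟩) satisfy ∫_{x1}^{x2} φ_n^{(1)} φ_m^{(1)} = h_n δ_{nm}, i.e., the Abraham–Moses transformation preserves inner products of the original eigenfunctions. -/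
open Set MeasureTheory intervalIntegral Filter Topology

/-!
Write `W = ∫ₐ g²`, `V_f = ∫ₐ g f` and `ψ_f = f - g V_f / (1 + W)`. On `(a, b)` the defect
`f e - ψ_f ψ_e` is the derivative of `V_f V_e / (1 + W)`, which tends to `0` at `a` (the
primitives vanish there) and at `b` (the `V`'s stay bounded while `W → ∞`). The defect is
integrable: apart from `g f` and `g e` with bounded coefficients it involves `g² / (1 + W)²`,
the derivative of the increasing function `-(1 + W)⁻¹`, which runs from `-1` to `0`. So the
defect integrates to `0`.
-/

theorem integral_eq_of_integral_sub_eq_zero {α E : Type*} [MeasurableSpace α] {μ : Measure α}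
    [NormedAddCommGroup E] [NormedSpace ℝ E] {f g : α → E}
    (hint : Integrable (fun x => f x - g x) μ) (hzero : ∫ x, f x - g x ∂μ = 0) :
    ∫ x, f x ∂μ = ∫ x, g x ∂μ := by
  by_cases hg : Integrable g μ
  · have hf : Integrable f μ := (hint.add hg).congr (ae_of_all _ fun x => by simp)
    rwa [integral_sub hf hg, sub_eq_zero] at hzero
  · have hf : ¬ Integrable f μ := fun hf => hg ((hf.sub hint).congr (ae_of_all _ fun x => by simp))
    rw [integral_undef hf, integral_undef hg]

theorem MeasureTheory.IntegrableOn.continuousOn_mul_of_abs_le {μ : Measure ℝ} {s : Set ℝ}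
    {h k : ℝ → ℝ} {C : ℝ} (hs : MeasurableSet s) (hh : IntegrableOn h s μ) (hk : ContinuousOn k s)
    (hbound : ∀ y ∈ s, |k y| ≤ C) : IntegrableOn (fun y => k y * h y) s μ :=
  hh.bdd_mul (hk.aestronglyMeasurable hs) ((ae_restrict_iff' hs).mpr (ae_of_all _ hbound))

section Interval

variable {a b : ℝ}

theorem integrableOn_Ioo_deriv_of_nonneg_of_tendsto (hab : a < b) {g g' : ℝ → ℝ} {ga gb : ℝ}
    (hderiv : ∀ x ∈ Ioo a b, HasDerivAt g (g' x) x) (hpos : ∀ x ∈ Ioo a b, 0 ≤ g' x)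
    (ha : Tendsto g (𝓝[>] a) (𝓝 ga)) (hb : Tendsto g (𝓝[<] b) (𝓝 gb)) :
    IntegrableOn g' (Ioo a b) := by
  classical
  set G : ℝ → ℝ := Function.update (Function.update g a ga) b gb
  have hGg : ∀ x ∈ Ioo a b, G x = g x := fun x hx => by
    simp [G, hx.1.ne', hx.2.ne]
  have hGderiv : ∀ x ∈ Ioo a b, HasDerivAt G (g' x) x := fun x hx =>
    (hderiv x hx).congr_of_eventuallyEq
      (eventually_of_mem (Ioo_mem_nhds hx.1 hx.2) hGg)
  have hGcont : ContinuousOn G (Icc a b) := by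
    rw [continuousOn_update_iff, continuousOn_update_iff, Icc_sdiff_right, Ico_sdiff_left]
    refine ⟨⟨HasDerivAt.continuousOn hderiv, fun _ => ?_⟩, fun _ => ?_⟩
    · exact ha.mono_left (nhdsWithin_mono _ Ioo_subset_Ioi_self)
    · refine (hb.congr' ?_).mono_left (nhdsWithin_mono _ Ico_subset_Iio_self)
      filter_upwards [Ioo_mem_nhdsLT hab] with x hx
      simp [hx.1.ne']
  exact (integrableOn_Ioc_iff_integrableOn_Ioo).mp
    (integrableOn_deriv_of_nonneg hGcont hGderiv hpos)

theorem integral_Ioo_eq_sub_of_hasDerivAt_of_tendsto (hab : a < b) {g g' : ℝ → ℝ} {ga gb : ℝ}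
    (hderiv : ∀ x ∈ Ioo a b, HasDerivAt g (g' x) x) (hint : IntegrableOn g' (Ioo a b))
    (ha : Tendsto g (𝓝[>] a) (𝓝 ga)) (hb : Tendsto g (𝓝[<] b) (𝓝 gb)) :
    ∫ x in Ioo a b, g' x = gb - ga := by
  rw [← integral_Ioc_eq_integral_Ioo, ← integral_of_le hab.le]
  exact integral_eq_sub_of_hasDerivAt_of_tendsto hab hderiv
    ((intervalIntegrable_iff_integrableOn_Ioo_of_le hab.le).mpr hint) ha hb

variable {f : ℝ → ℝ}

theorem hasDerivAt_primitive_of_continuousOn (hfc : ContinuousOn f (Ioo a b))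
    (hfi : ∀ y ∈ Ioo a b, IntegrableOn f (Ioo a y)) {y : ℝ} (hy : y ∈ Ioo a b) :
    HasDerivAt (fun u => ∫ t in a..u, f t) (f y) y :=
  integral_hasDerivAt_right
    ((intervalIntegrable_iff_integrableOn_Ioo_of_le hy.1.le).mpr (hfi y hy))
    (hfc.stronglyMeasurableAtFilter isOpen_Ioo y hy) (hfc.continuousAt (isOpen_Ioo.mem_nhds hy))

theorem continuousOn_primitive_Icc (hab : a ≤ b) (hf : IntegrableOn f (Ioo a b)) :
    ContinuousOn (fun y => ∫ t in a..y, f t) (Icc a b) := by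
  simpa [uIcc_of_le hab] using continuousOn_primitive_interval'
    ((intervalIntegrable_iff_integrableOn_Ioo_of_le hab).mpr hf) left_mem_uIcc

theorem tendsto_primitive_nhdsGT (hab : a < b) (hf : IntegrableOn f (Ioo a b)) :
    Tendsto (fun y => ∫ t in a..y, f t) (𝓝[>] a) (𝓝 0) := by
  simpa using
    ((continuousOn_primitive_Icc hab.le hf a (left_mem_Icc.mpr hab.le)).mono_of_mem_nhdsWithin
      (Icc_mem_nhdsGT hab)).tendsto

theorem tendsto_primitive_nhdsLT (hab : a < b) (hf : IntegrableOn f (Ioo a b)) :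
    Tendsto (fun y => ∫ t in a..y, f t) (𝓝[<] b) (𝓝 (∫ t in a..b, f t)) :=
  ((continuousOn_primitive_Icc hab.le hf b (right_mem_Icc.mpr hab.le)).mono_of_mem_nhdsWithin
    (Icc_mem_nhdsLT hab)).tendsto

theorem abs_primitive_le_integral_abs (hf : IntegrableOn f (Ioo a b)) {y : ℝ}
    (hy : y ∈ Ioo a b) : |∫ t in a..y, f t| ≤ ∫ t in Ioo a b, |f t| := by
  calc |∫ t in a..y, f t| ≤ ∫ t in a..y, |f t| := abs_integral_le_integral_abs hy.1.le
    _ = ∫ t in Ioo a y, |f t| := by rw [integral_of_le hy.1.le, integral_Ioc_eq_integral_Ioo]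
    _ ≤ ∫ t in Ioo a b, |f t| :=
      setIntegral_mono_set hf.abs (ae_of_all _ fun t => abs_nonneg _)
        (Ioo_subset_Ioo_right hy.2.le).eventuallyLE

end Interval

/-- The Abraham–Moses transform `f - g ⟨g, f⟩ / (1 + ⟨g, g⟩)`,
where `⟨u, v⟩ y = ∫ t in a..y, u t * v t`. -/
noncomputable def amTransform (a : ℝ) (g f : ℝ → ℝ) (y : ℝ) : ℝ :=
  f y - g y / (1 + ∫ t in a..y, g t ^ 2) * ∫ t in a..y, g t * f t

noncomputable def amCorrection (a : ℝ) (g f e : ℝ → ℝ) (y : ℝ) : ℝ :=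
  (∫ t in a..y, g t * f t) * (∫ t in a..y, g t * e t) / (1 + ∫ t in a..y, g t ^ 2)

section AbrahamMoses

variable {a b : ℝ} {g f e : ℝ → ℝ}

theorem one_le_one_add_primitive_sq {y : ℝ} (hy : a ≤ y) : 1 ≤ 1 + ∫ t in a..y, g t ^ 2 :=
  le_add_of_nonneg_right (integral_nonneg hy fun t _ => sq_nonneg (g t))

theorem one_add_primitive_sq_pos {y : ℝ} (hy : a ≤ y) : 0 < 1 + ∫ t in a..y, g t ^ 2 :=
  zero_lt_one.trans_le (one_le_one_add_primitive_sq hy)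

theorem abs_div_one_add_primitive_sq_le {y : ℝ} (hy : a ≤ y) (x : ℝ) :
    |x / (1 + ∫ t in a..y, g t ^ 2)| ≤ |x| := by
  rw [abs_div, abs_of_pos (one_add_primitive_sq_pos hy)]
  exact div_le_self (abs_nonneg x) (one_le_one_add_primitive_sq hy)

theorem hasDerivAt_primitive_sq (hgc : ContinuousOn g (Ioo a b))
    (hg2 : ∀ x ∈ Ioo a b, IntegrableOn (fun y => g y ^ 2) (Ioo a x)) {y : ℝ} (hy : y ∈ Ioo a b) :
    HasDerivAt (fun u => ∫ t in a..u, g t ^ 2) (g y ^ 2) y :=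
  hasDerivAt_primitive_of_continuousOn (hgc.pow 2) hg2 hy

theorem hasDerivAt_primitive_mul (hgc : ContinuousOn g (Ioo a b)) (hfc : ContinuousOn f (Ioo a b))
    (hgf : IntegrableOn (fun y => g y * f y) (Ioo a b)) {y : ℝ} (hy : y ∈ Ioo a b) :
    HasDerivAt (fun u => ∫ t in a..u, g t * f t) (g y * f y) y :=
  hasDerivAt_primitive_of_continuousOn (hgc.mul hfc)
    (fun _ hx => hgf.mono_set (Ioo_subset_Ioo_right hx.2.le)) hy

theorem integrableOn_sq_div_one_add_primitive_sq (hab : a < b) (hgc : ContinuousOn g (Ioo a b))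
    (hg2 : ∀ x ∈ Ioo a b, IntegrableOn (fun y => g y ^ 2) (Ioo a x))
    (hdiv : Tendsto (fun x => ∫ t in a..x, g t ^ 2) (𝓝[<] b) atTop) :
    IntegrableOn (fun y => g y ^ 2 / (1 + ∫ t in a..y, g t ^ 2) ^ 2) (Ioo a b) := by
  obtain ⟨c, hc⟩ := exists_between hab
  have hWa := tendsto_primitive_nhdsGT hc.1 (hg2 c hc)
  refine integrableOn_Ioo_deriv_of_nonneg_of_tendsto hab
    (g := fun y => -(1 + ∫ t in a..y, g t ^ 2)⁻¹) (fun y hy => ?_) (fun y _ => by positivity)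
    ((hWa.const_add 1).inv₀ (by norm_num)).neg
    (tendsto_atTop_add_const_left _ 1 hdiv).inv_tendsto_atTop.neg
  have hpos := (one_add_primitive_sq_pos (g := g) hy.1.le).ne'
  refine (((hasDerivAt_primitive_sq hgc hg2 hy).const_add 1).inv hpos).neg.congr_deriv ?_
  field_simp

theorem hasDerivAt_amCorrection (hgc : ContinuousOn g (Ioo a b)) (hfc : ContinuousOn f (Ioo a b))
    (hec : ContinuousOn e (Ioo a b)) (hgf : IntegrableOn (fun y => g y * f y) (Ioo a b))
    (hge : IntegrableOn (fun y => g y * e y) (Ioo a b))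
    (hg2 : ∀ x ∈ Ioo a b, IntegrableOn (fun y => g y ^ 2) (Ioo a x)) {y : ℝ} (hy : y ∈ Ioo a b) :
    HasDerivAt (amCorrection a g f e)
      (f y * e y - amTransform a g f y * amTransform a g e y) y := by
  have hpos := (one_add_primitive_sq_pos (g := g) hy.1.le).ne'
  have hVU :=
    (hasDerivAt_primitive_mul hgc hfc hgf hy).mul (hasDerivAt_primitive_mul hgc hec hge hy)
  refine (hVU.div ((hasDerivAt_primitive_sq hgc hg2 hy).const_add 1) hpos).congr_deriv ?_
  simp only [amTransform, Pi.mul_apply]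
  field_simp
  ring

theorem integrableOn_mul_sub_amTransform_mul (hab : a < b) (hgc : ContinuousOn g (Ioo a b))
    (hfc : ContinuousOn f (Ioo a b)) (hec : ContinuousOn e (Ioo a b))
    (hgf : IntegrableOn (fun y => g y * f y) (Ioo a b))
    (hge : IntegrableOn (fun y => g y * e y) (Ioo a b))
    (hg2 : ∀ x ∈ Ioo a b, IntegrableOn (fun y => g y ^ 2) (Ioo a x))
    (hdiv : Tendsto (fun x => ∫ t in a..x, g t ^ 2) (𝓝[<] b) atTop) :
    IntegrableOn (fun y => f y * e y - amTransform a g f y * amTransform a g e y) (Ioo a b) := by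
  set W : ℝ → ℝ := fun y => 1 + ∫ t in a..y, g t ^ 2
  set V : ℝ → ℝ := fun y => ∫ t in a..y, g t * f t
  set U : ℝ → ℝ := fun y => ∫ t in a..y, g t * e t
  have hWc : ContinuousOn W (Ioo a b) :=
    continuousOn_const.add (HasDerivAt.continuousOn fun _ hy => hasDerivAt_primitive_sq hgc hg2 hy)
  have hW0 : ∀ y ∈ Ioo a b, W y ≠ 0 := fun _ hy => (one_add_primitive_sq_pos hy.1.le).ne'
  have hVc : ContinuousOn V (Ioo a b) :=
    HasDerivAt.continuousOn fun _ hy => hasDerivAt_primitive_mul hgc hfc hgf hy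
  have hUc : ContinuousOn U (Ioo a b) :=
    HasDerivAt.continuousOn fun _ hy => hasDerivAt_primitive_mul hgc hec hge hy
  have hV := fun y (hy : y ∈ Ioo a b) => abs_primitive_le_integral_abs hgf hy
  have hU := fun y (hy : y ∈ Ioo a b) => abs_primitive_le_integral_abs hge hy
  have hUf : IntegrableOn (fun y => U y / W y * (g y * f y)) (Ioo a b) :=
    hgf.continuousOn_mul_of_abs_le measurableSet_Ioo (hUc.div hWc hW0) fun y hy =>
      (abs_div_one_add_primitive_sq_le hy.1.le _).trans (hU y hy)
  have hVe : IntegrableOn (fun y => V y / W y * (g y * e y)) (Ioo a b) :=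
    hge.continuousOn_mul_of_abs_le measurableSet_Ioo (hVc.div hWc hW0) fun y hy =>
      (abs_div_one_add_primitive_sq_le hy.1.le _).trans (hV y hy)
  have hVUq : IntegrableOn (fun y => V y * U y * (g y ^ 2 / W y ^ 2)) (Ioo a b) :=
    (integrableOn_sq_div_one_add_primitive_sq hab hgc hg2 hdiv).continuousOn_mul_of_abs_le
      measurableSet_Ioo (hVc.mul hUc) fun y hy => by
        rw [abs_mul]
        exact mul_le_mul (hV y hy) (hU y hy) (abs_nonneg _) ((abs_nonneg _).trans (hV y hy))
  refine ((hUf.add hVe).sub hVUq).congr_fun (fun y hy => ?_) measurableSet_Ioo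
  have hWy := hW0 y hy
  simp only [amTransform, Pi.add_apply, Pi.sub_apply, W, V, U] at hWy ⊢
  field_simp
  ring

theorem tendsto_amCorrection_nhdsGT (hab : a < b)
    (hgf : IntegrableOn (fun y => g y * f y) (Ioo a b))
    (hge : IntegrableOn (fun y => g y * e y) (Ioo a b))
    (hg2 : ∀ x ∈ Ioo a b, IntegrableOn (fun y => g y ^ 2) (Ioo a x)) :
    Tendsto (amCorrection a g f e) (𝓝[>] a) (𝓝 0) := by
  obtain ⟨c, hc⟩ := exists_between hab
  have h := ((tendsto_primitive_nhdsGT hab hgf).mul (tendsto_primitive_nhdsGT hab hge)).div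
    ((tendsto_primitive_nhdsGT hc.1 (hg2 c hc)).const_add 1) (by norm_num)
  rwa [mul_zero, zero_div] at h

theorem tendsto_amCorrection_nhdsLT (hab : a < b)
    (hgf : IntegrableOn (fun y => g y * f y) (Ioo a b))
    (hge : IntegrableOn (fun y => g y * e y) (Ioo a b))
    (hdiv : Tendsto (fun x => ∫ t in a..x, g t ^ 2) (𝓝[<] b) atTop) :
    Tendsto (amCorrection a g f e) (𝓝[<] b) (𝓝 0) := by
  have h := ((tendsto_primitive_nhdsLT hab hgf).mul (tendsto_primitive_nhdsLT hab hge)).mul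
    (tendsto_atTop_add_const_left _ 1 hdiv).inv_tendsto_atTop
  rw [mul_zero] at h
  exact h.congr fun y => by simp only [amCorrection, Pi.inv_apply, div_eq_mul_inv]

theorem integral_amTransform_mul_amTransform (hab : a < b) (hgc : ContinuousOn g (Ioo a b))
    (hfc : ContinuousOn f (Ioo a b)) (hec : ContinuousOn e (Ioo a b))
    (hgf : IntegrableOn (fun y => g y * f y) (Ioo a b))
    (hge : IntegrableOn (fun y => g y * e y) (Ioo a b))
    (hg2 : ∀ x ∈ Ioo a b, IntegrableOn (fun y => g y ^ 2) (Ioo a x))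
    (hdiv : Tendsto (fun x => ∫ t in a..x, g t ^ 2) (𝓝[<] b) atTop) :
    ∫ y in Ioo a b, amTransform a g f y * amTransform a g e y = ∫ y in Ioo a b, f y * e y := by
  have hint := integrableOn_mul_sub_amTransform_mul hab hgc hfc hec hgf hge hg2 hdiv
  refine (integral_eq_of_integral_sub_eq_zero hint ?_).symm
  simpa using integral_Ioo_eq_sub_of_hasDerivAt_of_tendsto hab
    (fun _ hy => hasDerivAt_amCorrection hgc hfc hec hgf hge hg2 hy) hint
    (tendsto_amCorrection_nhdsGT hab hgf hge hg2) (tendsto_amCorrection_nhdsLT hab hgf hge hdiv)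

end AbrahamMoses

theorem am_preserves_inner_products (x1 x2 : ℝ) (hlt : x1 < x2)
    (φ1 : ℝ → ℝ) (φ : ℕ → ℝ → ℝ) (h : ℕ → ℝ)
    (hφ1c : ContinuousOn φ1 (Ioo x1 x2))
    (hφc : ∀ n, ContinuousOn (φ n) (Ioo x1 x2))
    (horth : ∀ n m, ∫ y in Ioo x1 x2, φ n y * φ m y =
      if n = m then h n else 0)
    (hint1 : ∀ n, IntegrableOn (fun y => φ1 y * φ n y) (Ioo x1 x2))
    (hint2 : ∀ x ∈ Ioo x1 x2, IntegrableOn (fun y => φ1 y ^ 2) (Ioo x1 x))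
    (hdiv : Tendsto (fun x => ∫ t in x1..x, φ1 t ^ 2)
      (nhdsWithin x2 (Iio x2)) atTop) :
    ∀ n m,
      ∫ y in Ioo x1 x2,
        (φ n y - φ1 y / (1 + ∫ t in x1..y, φ1 t ^ 2) *
            ∫ t in x1..y, φ1 t * φ n t) *
        (φ m y - φ1 y / (1 + ∫ t in x1..y, φ1 t ^ 2) *
            ∫ t in x1..y, φ1 t * φ m t) =
      if n = m then h n else 0 := by
  intro n m
  rw [← horth n m]
  exact integral_amTransform_mul_amTransform hlt hφ1c (hφc n) (hφc m) (hint1 n) (hint1 m) hint2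
    hdiv
end

section
/- One-state-adding Abraham–Moses transformation of the seed itself: if φ is twice differentiable on (x1,x2) with −φ'' + Uφ = Ẽφ, and Φ = φ/(1+⟨φ,φ⟩) with ⟨φ,φ⟩(x) = ∫_{x1}^x φ², then Φ satisfies −Φ'' + U^{(1)}Φ = ẼΦ, where U^{(1)} = U − 2 (log(1+⟨φ,φ⟩))''. Equivalently, Φ'' = (U − Ẽ)Φ − 4φ'Φ² + 2φ²Φ³. -/
/-!
Only the quotient rule and the fundamental theorem of calculus are involved: the normaliser
`N = 1 + ⟨φ, φ⟩` is positive with `N' = φ²`, so `Φ' = φ' / N - φ³ / N²`, and differentiating once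
more produces `φ''`, which the Schrödinger equation replaces by `(U - Ẽ) φ`, plus powers of `φ / N`.
-/

open Set MeasureTheory intervalIntegral Filter Topology

section QuotientByNormaliser

variable {φ N : ℝ → ℝ} {x : ℝ}

theorem hasDerivAt_div_of_hasDerivAt_sq {φ'x : ℝ} (hφ : HasDerivAt φ φ'x x)
    (hN : HasDerivAt N (φ x ^ 2) x) (hN0 : N x ≠ 0) :
    HasDerivAt (fun y => φ y / N y) (φ'x / N x - φ x ^ 3 / N x ^ 2) x := by
  refine (hφ.div hN hN0).congr_deriv ?_
  field_simp

theorem hasDerivAt_deriv_div_of_hasDerivAt_sq {φ' : ℝ → ℝ} {φ''x : ℝ}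
    (hφ : ∀ᶠ y in 𝓝 x, HasDerivAt φ (φ' y) y) (hφ' : HasDerivAt φ' φ''x x)
    (hN : ∀ᶠ y in 𝓝 x, HasDerivAt N (φ y ^ 2) y) (hN0 : ∀ᶠ y in 𝓝 x, N y ≠ 0) :
    HasDerivAt (deriv fun y => φ y / N y)
      (φ''x / N x - 4 * φ' x * (φ x / N x) ^ 2 + 2 * φ x ^ 2 * (φ x / N x) ^ 3) x := by
  have hderiv : deriv (fun y => φ y / N y) =ᶠ[𝓝 x] fun y => φ' y / N y - φ y ^ 3 / N y ^ 2 := by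
    filter_upwards [hφ, hN, hN0] with y hφy hNy hN0y
    exact (hasDerivAt_div_of_hasDerivAt_sq hφy hNy hN0y).deriv
  have hNx := hN.self_of_nhds
  have hN0x := hN0.self_of_nhds
  have hcube : HasDerivAt (fun y => φ y ^ 3) (3 * φ x ^ 2 * φ' x) x := by
    refine (hφ.self_of_nhds.pow 3).congr_deriv ?_
    norm_num
  have hsquare : HasDerivAt (fun y => N y ^ 2) (2 * N x * φ x ^ 2) x := by
    refine (hNx.pow 2).congr_deriv ?_
    norm_num
  refine (((hφ'.div hNx hN0x).sub (hcube.div hsquare (pow_ne_zero 2 hN0x))).congr_of_eventuallyEq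
    hderiv).congr_deriv ?_
  field_simp
  ring

end QuotientByNormaliser

theorem hasDerivAt_integral_of_continuousOn {f : ℝ → ℝ} {s : Set ℝ} {a x : ℝ} (hs : IsOpen s)
    (hf : ContinuousOn f s) (hx : x ∈ s) (hint : IntervalIntegrable f volume a x) :
    HasDerivAt (fun y => ∫ t in a..y, f t) (f x) x :=
  integral_hasDerivAt_right hint (hf.stronglyMeasurableAtFilter hs x hx)
    (hf.continuousAt (hs.mem_nhds hx))

theorem am_transformed_seed_schrodinger_general (x1 x2 : ℝ) (U φ φ' φ'' : ℝ → ℝ)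
    (Etil : ℝ)
    (hφ1 : ∀ x ∈ Ioo x1 x2, HasDerivAt φ (φ' x) x)
    (hφ2 : ∀ x ∈ Ioo x1 x2, HasDerivAt φ' (φ'' x) x)
    (hφeq : ∀ x ∈ Ioo x1 x2, -φ'' x + U x * φ x = Etil * φ x)
    (hint : ∀ x ∈ Ioo x1 x2, IntegrableOn (fun y => φ y ^ 2) (Ioo x1 x)) :
    ∀ x ∈ Ioo x1 x2,
      deriv (deriv (fun y => φ y / (1 + ∫ t in x1..y, φ t ^ 2))) x =
        (U x - Etil) * (φ x / (1 + ∫ t in x1..x, φ t ^ 2)) -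
          4 * φ' x * (φ x / (1 + ∫ t in x1..x, φ t ^ 2)) ^ 2 +
          2 * φ x ^ 2 * (φ x / (1 + ∫ t in x1..x, φ t ^ 2)) ^ 3 := by
  intro x hx
  have hφ_sq : ContinuousOn (fun y => φ y ^ 2) (Ioo x1 x2) := fun y hy =>
    ((hφ1 y hy).continuousAt.pow 2).continuousWithinAt
  have hN : ∀ y ∈ Ioo x1 x2, HasDerivAt (fun z => 1 + ∫ t in x1..z, φ t ^ 2) (φ y ^ 2) y :=
    fun y hy => (hasDerivAt_integral_of_continuousOn isOpen_Ioo hφ_sq hy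
      ((intervalIntegrable_iff_integrableOn_Ioo_of_le hy.1.le).2 (hint y hy))).const_add 1
  have hN0 : ∀ y ∈ Ioo x1 x2, 1 + ∫ t in x1..y, φ t ^ 2 ≠ 0 := fun y hy =>
    (add_pos_of_pos_of_nonneg one_pos (integral_nonneg hy.1.le fun t _ => sq_nonneg (φ t))).ne'
  have hnhds : Ioo x1 x2 ∈ 𝓝 x := isOpen_Ioo.mem_nhds hx
  rw [(hasDerivAt_deriv_div_of_hasDerivAt_sq (eventually_of_mem hnhds hφ1) (hφ2 x hx)
    (eventually_of_mem hnhds hN) (eventually_of_mem hnhds hN0)).deriv]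
  have hφ''_eq : φ'' x = (U x - Etil) * φ x := by linarith [hφeq x hx]
  rw [hφ''_eq, mul_div_assoc]

theorem am_transformed_seed_schrodinger (x1 x2 : ℝ) (U φ φ' φ'' : ℝ → ℝ)
    (Etil : ℝ)
    (hU : ContinuousOn U (Ioo x1 x2))
    (hφ1 : ∀ x ∈ Ioo x1 x2, HasDerivAt φ (φ' x) x)
    (hφ2 : ∀ x ∈ Ioo x1 x2, HasDerivAt φ' (φ'' x) x)
    (hφeq : ∀ x ∈ Ioo x1 x2, -φ'' x + U x * φ x = Etil * φ x)
    (hint : ∀ x ∈ Ioo x1 x2, IntegrableOn (fun y => φ y ^ 2) (Ioo x1 x)) :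
    ∀ x ∈ Ioo x1 x2,
      deriv (deriv (fun y => φ y / (1 + ∫ t in x1..y, φ t ^ 2))) x =
        (U x - Etil) * (φ x / (1 + ∫ t in x1..x, φ t ^ 2)) -
          4 * φ' x * (φ x / (1 + ∫ t in x1..x, φ t ^ 2)) ^ 2 +
          2 * φ x ^ 2 * (φ x / (1 + ∫ t in x1..x, φ t ^ 2)) ^ 3 :=
  am_transformed_seed_schrodinger_general x1 x2 U φ φ' φ'' Etil hφ1 hφ2 hφeq hint
end
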